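/- arXiv:1909.02864 — 3 statements merged into one kernel-verified Lean document; each statement's English description precedes it below -/
import Mathlib

section
/- For any two partitions 𝒜 and ℬ of a finite set S, |𝒜 ∧ ℬ| = |𝒜 ∨ ℬ| holds if and only if 𝒜 = ℬ. -/
lemma quotMap_surj {S : Type*} {r s : Setoid S} (h : r ≤ s) :
    Function.Surjective (Quotient.map' (s₁ := r) (s₂ := s) id (fun _ _ hab => h hab)) := by
  intro x
  induction x using Quotient.inductionOn' with
  | h a => exact ⟨Quotient.mk'' a, rfl⟩

lemma eq_of_le_of_card {S : Type*} [Finite S] {r s : Setoid S} (h : r ≤ s)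
    (hc : Nat.card (Quotient r) = Nat.card (Quotient s)) : r = s := by
  set f := Quotient.map' (s₁ := r) (s₂ := s) id (fun _ _ hab => h hab) with hf
  have hbij : Function.Bijective f :=
    (Nat.bijective_iff_surjective_and_card f).mpr ⟨quotMap_surj h, hc⟩
  refine le_antisymm h (fun {a b} hab => ?_)
  have : f (Quotient.mk'' a) = f (Quotient.mk'' b) := Quotient.sound' hab
  exact Quotient.exact' (hbij.injective this)

lemma card_le_of_le {S : Type*} [Finite S] {r s : Setoid S} (h : r ≤ s) :
    Nat.card (Quotient s) ≤ Nat.card (Quotient r) :=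
  Nat.card_le_card_of_surjective _ (quotMap_surj h)

/-- For partitions `A`, `B` of a finite set, `|A ∧ B| = |A ∨ B|` iff `A = B`. -/
theorem meet_blocks_eq_join_blocks_iff {S : Type*} [Fintype S] (A B : Setoid S) :
    Nat.card (Quotient (A ⊓ B)) = Nat.card (Quotient (A ⊔ B)) ↔ A = B := by
  constructor
  · intro h
    have h1 : Nat.card (Quotient A) ≤ Nat.card (Quotient (A ⊓ B)) :=
      card_le_of_le inf_le_left
    have h2 : Nat.card (Quotient (A ⊔ B)) ≤ Nat.card (Quotient A) :=
      card_le_of_le le_sup_left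
    have h3 : Nat.card (Quotient B) ≤ Nat.card (Quotient (A ⊓ B)) :=
      card_le_of_le inf_le_right
    have h4 : Nat.card (Quotient (A ⊔ B)) ≤ Nat.card (Quotient B) :=
      card_le_of_le le_sup_right
    have hA : A ⊓ B = A := eq_of_le_of_card inf_le_left (le_antisymm (h ▸ h2) h1)
    have hB : A ⊓ B = B := eq_of_le_of_card inf_le_right (le_antisymm (h ▸ h4) h3)
    exact hA.symm.trans hB
  · rintro rfl
    rw [inf_idem, sup_idem]
end

section
/- Let q be an indeterminate over ℤ and let D be the matrix indexed by partitions of a finite set S of cardinality n ≥ 1 with entries D_{𝒜ℬ} = q^{n − |𝒜∧ℬ| + |𝒜∨ℬ| − 1} in ℤ[q]. Then the determinant of D is a nonzero polynomial, whose leading term (in degree) comes from the diagonal: each diagonal entry has degree n−1 and every off-diagonal entry has strictly smaller degree. -/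
open Polynomial

lemma card_quot_lt {S : Type*} [Finite S] {r s : Setoid S} (h : r < s) :
    Nat.card (Quotient s) < Nat.card (Quotient r) := by
  let f : Quotient r → Quotient s := Quotient.map' id (fun a b hab => h.le hab)
  have hsurj : Function.Surjective f := by
    intro x; induction x using Quotient.ind with
    | _ a => exact ⟨Quotient.mk'' a, rfl⟩
  have hle : Nat.card (Quotient s) ≤ Nat.card (Quotient r) :=
    Nat.card_le_card_of_surjective f hsurj
  rcases hle.lt_or_eq with h' | h'
  · exact h'
  · exfalso
    have hbij : Function.Bijective f :=
      (Nat.bijective_iff_surjective_and_card f).mpr ⟨hsurj, h'.symm⟩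
    have : s ≤ r := by
      intro a b hab
      have : f (Quotient.mk'' a) = f (Quotient.mk'' b) := Quotient.sound' hab
      exact Quotient.exact' (hbij.1 this)
    exact absurd (le_antisymm h.le this) h.ne


/-- Over `ℤ[q]`, the matrix `D` indexed by partitions of a finite set `S` of cardinality
`n ≥ 1`, with entries `D_{A B} = q ^ (n − |A∧B| + |A∨B| − 1)`, has nonzero determinant;
each diagonal entry has degree `n − 1` and every off-diagonal entry has strictly smaller
degree. -/
theorem det_splitting_matrix_ne_zero {S : Type*} [Fintype S]
    [Fintype (Setoid S)] [DecidableEq (Setoid S)]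
    (hn : 1 ≤ Fintype.card S)
    (D : Matrix (Setoid S) (Setoid S) (Polynomial ℤ))
    (hD : ∀ A B : Setoid S, D A B = Polynomial.X ^
      (Fintype.card S - Nat.card (Quotient (A ⊓ B)) + Nat.card (Quotient (A ⊔ B)) - 1)) :
    D.det ≠ 0 ∧
    (∀ A : Setoid S, (D A A).natDegree = Fintype.card S - 1) ∧
    (∀ A B : Setoid S, A ≠ B → (D A B).natDegree < Fintype.card S - 1) := by
  set n := Fintype.card S with hndef
  have hne : Nonempty S := Fintype.card_pos_iff.mp hn
  set e : Setoid S → Setoid S → ℕ := fun A B =>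
    n - Nat.card (Quotient (A ⊓ B)) + Nat.card (Quotient (A ⊔ B)) - 1 with hedef
  have hcard : ∀ r : Setoid S, 1 ≤ Nat.card (Quotient r) ∧ Nat.card (Quotient r) ≤ n := by
    intro r
    have : Nonempty (Quotient r) := Nonempty.map (Quotient.mk r) hne
    constructor
    · exact Nat.card_pos
    · have := Nat.card_le_card_of_surjective (Quotient.mk r) Quotient.mk_surjective
      simpa [Nat.card_eq_fintype_card] using this
  have hdiag : ∀ A : Setoid S, e A A = n - 1 := by
    intro A
    have h1 := hcard A
    simp only [hedef, inf_idem, sup_idem]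
    omega
  have hoff : ∀ A B : Setoid S, A ≠ B → e A B < n - 1 := by
    intro A B hAB
    have hlt : Nat.card (Quotient (A ⊔ B)) < Nat.card (Quotient (A ⊓ B)) :=
      card_quot_lt (inf_lt_sup.mpr hAB)
    have h1 := hcard (A ⊓ B)
    have h2 := hcard (A ⊔ B)
    simp only [hedef]
    omega
  have hle : ∀ A B : Setoid S, e A B ≤ n - 1 := by
    intro A B
    rcases eq_or_ne A B with rfl | h
    · exact (hdiag A).le
    · exact (hoff A B h).le
  set N : ℕ := Fintype.card (Setoid S) * (n - 1) with hNdef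
  have hEsum : ∀ σ : Equiv.Perm (Setoid S), σ ≠ 1 →
      ∑ i : Setoid S, e (σ i) i < N := by
    intro σ hσ
    obtain ⟨i, hi⟩ : ∃ i, σ i ≠ i := by
      by_contra h
      push_neg at h
      exact hσ (Equiv.ext h)
    calc ∑ i : Setoid S, e (σ i) i < ∑ _i : Setoid S, (n - 1) :=
          Finset.sum_lt_sum (fun j _ => hle (σ j) j)
            ⟨i, Finset.mem_univ i, hoff (σ i) i hi⟩
      _ = N := by simp [hNdef, mul_comm]
  have hprod : ∀ σ : Equiv.Perm (Setoid S),
      (∏ i : Setoid S, D (σ i) i) = X ^ (∑ i : Setoid S, e (σ i) i) := by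
    intro σ
    simp_rw [hD]
    rw [Finset.prod_pow_eq_pow_sum]
  have hcoeff : D.det.coeff N = 1 := by
    rw [Matrix.det_apply, Polynomial.finset_sum_coeff]
    rw [Finset.sum_eq_single (1 : Equiv.Perm (Setoid S))]
    · have h1 := hprod 1
      simp only [Equiv.Perm.one_apply] at h1 ⊢
      rw [Polynomial.coeff_smul, h1, Polynomial.coeff_X_pow,
        if_pos (by simp [hdiag, hNdef, mul_comm])]
      simp
    · intro σ _ hσ
      rw [Polynomial.coeff_smul, hprod, Polynomial.coeff_X_pow,
        if_neg (by exact (hEsum σ hσ).ne'), smul_zero]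
    · intro h; exact absurd (Finset.mem_univ _) h
  refine ⟨?_, ?_, ?_⟩
  · intro h
    rw [h] at hcoeff
    simp at hcoeff
  · intro A
    rw [hD A A]
    rw [Polynomial.natDegree_X_pow]
    exact hdiag A
  · intro A B hAB
    rw [hD A B]
    rw [Polynomial.natDegree_X_pow]
    exact hoff A B hAB
end

section
/- Let D be the matrix indexed by partitions of a finite set S (|S| = n ≥ 1) over the field ℚ(q) with entries D_{𝒜ℬ} = q^{n − |𝒜∧ℬ| + |𝒜∨ℬ| − 1}. Then D is invertible over ℚ(q). -/
/-!
All entries of `D` are powers of `q`. The diagonal exponent is `n − 1`, and every other exponent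
in a column is strictly smaller: `A ≠ B` forces `A ∧ B < A ∨ B`, hence `|A ∨ B| < |A ∧ B|`. So in
the Leibniz expansion of `det D` only the identity permutation reaches the top degree
`(n − 1) · #partitions`, and `det D` is a nonzero polynomial in `q`.
-/

open Polynomial

theorem Equiv.Perm.sum_apply_lt_sum_diag {ι M : Type*} [Fintype ι] [AddCommMonoid M]
    [PartialOrder M] [IsOrderedCancelAddMonoid M] (e : ι → ι → M)
    (he : ∀ i j, i ≠ j → e i j < e j j) {σ : Equiv.Perm ι} (hσ : σ ≠ 1) :
    ∑ i, e (σ i) i < ∑ i, e i i := by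
  obtain ⟨i₀, hi₀⟩ : ∃ i, σ i ≠ i := by
    by_contra! h
    exact hσ (Equiv.ext h)
  refine Finset.sum_lt_sum (fun i _ => ?_) ⟨i₀, Finset.mem_univ _, he _ _ hi₀⟩
  rcases eq_or_ne (σ i) i with h | h
  · rw [h]
  · exact (he _ _ h).le

theorem Matrix.coeff_det_of_X_pow_of_lt_diag {ι R : Type*} [Fintype ι] [DecidableEq ι]
    [CommRing R] (e : ι → ι → ℕ) (he : ∀ i j, i ≠ j → e i j < e j j) :
    (Matrix.of fun i j => (X : R[X]) ^ e i j).det.coeff (∑ i, e i i) = 1 := by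
  rw [Matrix.det_apply, finsetSum_coeff, Finset.sum_eq_single_of_mem 1 (Finset.mem_univ _)]
  · simp [Finset.prod_pow_eq_pow_sum]
  · intro σ _ hσ
    have hlt := Equiv.Perm.sum_apply_lt_sum_diag e he hσ
    simp only [Matrix.of_apply, Finset.prod_pow_eq_pow_sum, coeff_smul, coeff_X_pow,
      if_neg hlt.ne', smul_zero]

theorem Matrix.det_of_X_pow_ne_zero_of_lt_diag {ι R : Type*} [Fintype ι] [DecidableEq ι]
    [CommRing R] [Nontrivial R] (e : ι → ι → ℕ) (he : ∀ i j, i ≠ j → e i j < e j j) :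
    (Matrix.of fun i j => (X : R[X]) ^ e i j).det ≠ 0 := fun h => by
  simpa [h] using Matrix.coeff_det_of_X_pow_of_lt_diag (R := R) e he

theorem Quot.factor_surjective {α : Type*} (r s : α → α → Prop) (h : ∀ x y, r x y → s x y) :
    Function.Surjective (Quot.factor r s h) :=
  (Quot.surjective_lift _).2 Quot.mk_surjective

namespace Setoid

variable {α : Type*} [Finite α]

theorem card_quotient_le_of_le {r s : Setoid α} (h : r ≤ s) :
    Nat.card (Quotient s) ≤ Nat.card (Quotient r) :=
  Nat.card_le_card_of_surjective _ (Quot.factor_surjective r s h)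

theorem card_quotient_lt_of_lt {r s : Setoid α} (h : r < s) :
    Nat.card (Quotient s) < Nat.card (Quotient r) := by
  refine (card_quotient_le_of_le h.le).lt_of_ne fun hc => h.not_ge fun x y hs => ?_
  have hbij := (Quot.factor_surjective r s h.le).bijective_of_nat_card_le hc.ge
  exact Quotient.exact (hbij.injective (Quotient.sound hs))

theorem card_quotient_le_card (r : Setoid α) : Nat.card (Quotient r) ≤ Nat.card α :=
  Nat.card_le_card_of_surjective _ Quotient.mk_surjective

noncomputable def splittingExponent (A B : Setoid α) : ℕ :=
  Nat.card α - Nat.card (Quotient (A ⊓ B)) + Nat.card (Quotient (A ⊔ B)) - 1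

theorem splittingExponent_lt_self {A B : Setoid α} (hAB : A ≠ B) :
    splittingExponent A B < splittingExponent B B := by
  -- `|A ∨ B| ≥ 1` keeps the truncated `- 1` from collapsing both sides to `0`.
  obtain ⟨a⟩ : Nonempty α := by
    by_contra h
    exact hAB (Setoid.ext fun a => (not_nonempty_iff.mp h).elim a)
  have hsup : 0 < Nat.card (Quotient (A ⊔ B)) :=
    Nat.card_pos_iff.2 ⟨⟨Quotient.mk _ a⟩, inferInstance⟩
  have hinf := card_quotient_le_card (A ⊓ B)
  have hB := card_quotient_le_card B
  have hlt := card_quotient_lt_of_lt (inf_lt_sup.mpr hAB)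
  simp only [splittingExponent, inf_idem, sup_idem]
  omega

end Setoid

theorem splitting_matrix_invertible_general {S : Type*} [Fintype S]
    [Fintype (Setoid S)] [DecidableEq (Setoid S)]
    (D : Matrix (Setoid S) (Setoid S) (RatFunc ℚ))
    (hD : ∀ A B : Setoid S, D A B = RatFunc.X ^
      (Fintype.card S - Nat.card (Quotient (A ⊓ B)) + Nat.card (Quotient (A ⊔ B)) - 1)) :
    IsUnit D.det := by
  have hDP : D = (Matrix.of fun A B => (X : ℚ[X]) ^ Setoid.splittingExponent A B).map
      (algebraMap ℚ[X] (RatFunc ℚ)) := by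
    ext A B
    simp [hD, Setoid.splittingExponent, RatFunc.algebraMap_X, Nat.card_eq_fintype_card]
  rw [isUnit_iff_ne_zero, hDP, ← RingHom.mapMatrix_apply, ← RingHom.map_det]
  exact RatFunc.algebraMap_ne_zero
    (Matrix.det_of_X_pow_ne_zero_of_lt_diag _ fun _ _ => Setoid.splittingExponent_lt_self)

/-- The matrix indexed by partitions of a finite set `S` with `|S| = n ≥ 1`, with entries
`D_{A B} = q ^ (n − |A∧B| + |A∨B| − 1)` over the field `ℚ(q)`, is invertible. -/
theorem splitting_matrix_invertible {S : Type*} [Fintype S]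
    [Fintype (Setoid S)] [DecidableEq (Setoid S)]
    (hn : 1 ≤ Fintype.card S)
    (D : Matrix (Setoid S) (Setoid S) (RatFunc ℚ))
    (hD : ∀ A B : Setoid S, D A B = RatFunc.X ^
      (Fintype.card S - Nat.card (Quotient (A ⊓ B)) + Nat.card (Quotient (A ⊔ B)) - 1)) :
    IsUnit D.det :=
  splitting_matrix_invertible_general D hD
end
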